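/- Let T > 0, n ∈ ℕ, p ∈ [1,∞), σ > 0, and let D ⊆ L^p((0,T);ℝⁿ) satisfy: (D1) every u ∈ D has a representative v with v(t) ∈ {0,1}ⁿ for all t ∈ (0,T) and Σ_{j=1}^n Var(v_j;(0,T)) ≤ σ (pointwise total variation), and (D2) D is closed in L^p((0,T);ℝⁿ). Let Π : L^p((0,T);ℝⁿ) → ℝ^M be the local averaging projection Π(u)_i = (1/λ(I_i)) ∫_{I_i} u_{j_i} dλ for nonempty bounded open subintervals I₁,…,I_M ⊆ (0,T) and indices j₁,…,j_M ∈ {1,…,n}, and set C_{D,Π} := conv{Π(u) : u ∈ D}. Then the closure in L^p((0,T);ℝⁿ) of the convex hull of D is contained in V := {v ∈ L^p((0,T);ℝⁿ) : Π(v) ∈ C_{D,Π}}. -/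

import Mathlib

/-!
The averaging map `Π` is continuous and linear with values in a finite-dimensional space, so
`Π ⁻¹' convexHull ℝ (Π '' D)` is convex, contains `D`, and is closed as soon as `Π '' D` is
compact: in finite dimension the convex hull of a compact set is compact (Carathéodory).
Compactness of `D` is Helly's selection theorem: a function with values in `{0,1}` and variation
at most `σ` is the difference of two monotone functions bounded by `σ + 1`; from any sequence of
such monotone functions a diagonal argument over the rationals extracts a subsequence converging
at every continuity point of the limit, hence outside a countable set, hence almost everywhere,
and for uniformly bounded functions on a finite measure space this gives convergence in `L^p`,
`p < ∞` (Vitali).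
-/

open MeasureTheory Set Filter
open scoped ENNReal NNReal Topology

theorem isCompact_convexHull {E : Type*} [NormedAddCommGroup E] [NormedSpace ℝ E]
    [FiniteDimensional ℝ E] {s : Set E} (hs : IsCompact s) : IsCompact (convexHull ℝ s) := by
  -- By Carathéodory, `convexHull ℝ s` is the union over `m ≤ finrank + 1` of the images of
  -- `stdSimplex ℝ (Fin m) × s ^ m` under `(w, z) ↦ ∑ i, w i • z i`.
  let K : ℕ → Set E := fun m => (fun wz : (Fin m → ℝ) × (Fin m → E) => ∑ i, wz.1 i • wz.2 i) ''
    (stdSimplex ℝ (Fin m) ×ˢ univ.pi fun _ => s)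
  have hK : convexHull ℝ s = ⋃ m ∈ Iic (Module.finrank ℝ E + 1), K m := by
    apply Subset.antisymm
    · intro x hx
      obtain ⟨ι, _, z, w, hzs, hz, hw0, hw1, rfl⟩ := eq_pos_convex_span_of_mem_convexHull hx
      let e := Fintype.equivFin ι
      refine mem_iUnion₂.2 ⟨Fintype.card ι,
        hz.card_le_finrank_succ.trans (Nat.succ_le_succ (Submodule.finrank_le _)),
        (w ∘ e.symm, z ∘ e.symm), ⟨⟨fun i => (hw0 _).le, ?_⟩, fun i _ => hzs ⟨_, rfl⟩⟩, ?_⟩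
      · simpa only [Function.comp_apply, e.symm.sum_comp] using hw1
      · simp only [Function.comp_apply, e.symm.sum_comp (fun i => w i • z i)]
    · refine iUnion₂_subset fun m _ => ?_
      rintro _ ⟨⟨w, z⟩, ⟨⟨hw0, hw1⟩, hz⟩, rfl⟩
      exact (convex_convexHull ℝ s).sum_mem (fun i _ => hw0 i) hw1
        fun i _ => subset_convexHull ℝ s (hz i trivial)
  rw [hK]
  exact (finite_Iic _).isCompact_biUnion fun m _ =>
    ((isCompact_stdSimplex _ _).prod (isCompact_univ_pi fun _ => hs)).image (by fun_prop)

theorem closure_convexHull_subset_preimage_convexHull_image {E F : Type*} [AddCommGroup E]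
    [Module ℝ E] [TopologicalSpace E] [NormedAddCommGroup F] [NormedSpace ℝ F]
    [FiniteDimensional ℝ F] (L : E →L[ℝ] F) {D : Set E} (hD : IsCompact D) :
    closure (convexHull ℝ D) ⊆ L ⁻¹' convexHull ℝ (L '' D) :=
  closure_minimal
    (convexHull_min (fun _ hx => subset_convexHull ℝ _ (mem_image_of_mem L hx))
      ((convex_convexHull ℝ _).linear_preimage (L : E →ₗ[ℝ] F)))
    ((isCompact_convexHull (hD.image L.continuous)).isClosed.preimage L.continuous)

theorem tendsto_of_monotone_of_continuousAt {f : ℕ → ℝ → ℝ} (hf : ∀ k, Monotone (f k))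
    {g : ℝ → ℝ} {x : ℝ} (hg : ContinuousAt g x)
    (hfg : ∀ q : ℚ, Tendsto (fun k => f k q) atTop (𝓝 (g q))) :
    Tendsto (fun k => f k x) atTop (𝓝 (g x)) := by
  refine tendsto_order.2 ⟨fun a ha => ?_, fun a ha => ?_⟩
  · obtain ⟨l, u, ⟨hlx, hxu⟩, hlu⟩ :=
      mem_nhds_iff_exists_Ioo_subset.1 (hg.preimage_mem_nhds (Ioi_mem_nhds ha))
    obtain ⟨q, hlq, hqx⟩ := exists_rat_btwn hlx
    filter_upwards [(tendsto_order.1 (hfg q)).1 a (hlu ⟨hlq, hqx.trans hxu⟩)] with k hk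
    exact hk.trans_le (hf k hqx.le)
  · obtain ⟨l, u, ⟨hlx, hxu⟩, hlu⟩ :=
      mem_nhds_iff_exists_Ioo_subset.1 (hg.preimage_mem_nhds (Iio_mem_nhds ha))
    obtain ⟨q, hxq, hqu⟩ := exists_rat_btwn hxu
    filter_upwards [(tendsto_order.1 (hfg q)).2 a (hlu ⟨hlx.trans hxq, hqu⟩)] with k hk
    exact (hf k hxq.le).trans_lt hk

theorem Monotone.exists_monotone_extension_rat {G : ℚ → ℝ} (hG : Monotone G)
    (hl : BddBelow (range G)) (hu : BddAbove (range G)) :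
    ∃ g : ℝ → ℝ, Monotone g ∧ ∀ q : ℚ, g q = G q := by
  let f : ℝ → ℝ := Function.extend ((↑) : ℚ → ℝ) G 0
  have hf : ∀ q : ℚ, f q = G q := fun q => Rat.cast_injective.extend_apply _ _ q
  have himage : f '' range ((↑) : ℚ → ℝ) = range G := by
    rw [← range_comp]; exact congrArg range (funext hf)
  have hmono : MonotoneOn f (range ((↑) : ℚ → ℝ)) := by
    rintro _ ⟨q, rfl⟩ _ ⟨q', rfl⟩ h
    rw [hf, hf]
    exact hG (by exact_mod_cast h)
  obtain ⟨g, hg, hfg⟩ := hmono.exists_monotone_extension (himage ▸ hl) (himage ▸ hu)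
  exact ⟨g, hg, fun q => (hfg ⟨q, rfl⟩).symm.trans (hf q)⟩

/-- **Helly's selection theorem**. -/
theorem exists_subseq_tendsto_of_monotone {ι : Type*} [Countable ι] {C : ℝ}
    (f : ℕ → ι → ℝ → ℝ) (hf : ∀ k i, Monotone (f k i)) (hC : ∀ k i x, |f k i x| ≤ C) :
    ∃ φ : ℕ → ℕ, StrictMono φ ∧ ∃ N : Set ℝ, N.Countable ∧ ∃ g : ι → ℝ → ℝ,
      ∀ i, ∀ x ∉ N, Tendsto (fun k => f (φ k) i x) atTop (𝓝 (g i x)) := by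
  obtain ⟨G, hGC, φ, hφ, hG⟩ :=
    (isCompact_univ_pi fun _ : ι × ℚ => isCompact_Icc (a := -C) (b := C)).isSeqCompact
      (x := fun k iq => f k iq.1 iq.2) fun k iq _ => abs_le.1 (hC k iq.1 iq.2)
  have hGi : ∀ i (q : ℚ), Tendsto (fun k => f (φ k) i q) atTop (𝓝 (G (i, q))) :=
    fun i q => tendsto_pi_nhds.1 hG (i, q)
  have hext : ∀ i, ∃ g : ℝ → ℝ, Monotone g ∧ ∀ q : ℚ, g q = G (i, q) := fun i =>
    Monotone.exists_monotone_extension_rat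
      (fun q q' h => le_of_tendsto_of_tendsto' (hGi i q) (hGi i q') fun k =>
        hf _ i (by exact_mod_cast h))
      ⟨-C, by rintro _ ⟨q, rfl⟩; exact (hGC (i, q) trivial).1⟩
      ⟨C, by rintro _ ⟨q, rfl⟩; exact (hGC (i, q) trivial).2⟩
  choose g hg hgG using hext
  refine ⟨φ, hφ, ⋃ i, {x | ¬ContinuousAt (g i) x},
    countable_iUnion fun i => (hg i).countable_not_continuousAt, g, fun i x hx => ?_⟩
  refine tendsto_of_monotone_of_continuousAt (fun k => hf (φ k) i) ?_ fun q => hgG i q ▸ hGi i q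
  by_contra h
  exact hx (mem_iUnion.2 ⟨i, h⟩)

theorem MonotoneOn.exists_monotone_extension_abs_le {α : Type*} [LinearOrder α] {f : α → ℝ}
    {s : Set α} {C : ℝ} (hf : MonotoneOn f s) (hC0 : 0 ≤ C) (hC : ∀ x ∈ s, |f x| ≤ C) :
    ∃ g : α → ℝ, Monotone g ∧ EqOn f g s ∧ ∀ x, |g x| ≤ C := by
  obtain ⟨g, hg, hfg⟩ := hf.exists_monotone_extension
    ⟨-C, by rintro _ ⟨x, hx, rfl⟩; exact (abs_le.1 (hC x hx)).1⟩
    ⟨C, by rintro _ ⟨x, hx, rfl⟩; exact (abs_le.1 (hC x hx)).2⟩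
  refine ⟨fun x => max (-C) (min C (g x)),
    fun x y h => max_le_max le_rfl (min_le_min le_rfl (hg h)), fun x hx => ?_,
    fun x => abs_le.2 ⟨le_max_left _ _, max_le (by linarith) (min_le_left _ _)⟩⟩
  obtain ⟨hlo, hhi⟩ := abs_le.1 (hC x hx)
  simp only [← hfg hx, min_eq_right hhi, max_eq_right hlo]

theorem exists_monotone_sub_monotone_of_eVariationOn_le {α : Type*} [LinearOrder α] {f : α → ℝ}
    {s : Set α} {C V : ℝ≥0} (hC : ∀ x ∈ s, |f x| ≤ C) (hV : eVariationOn f s ≤ V) :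
    ∃ P Q : α → ℝ, Monotone P ∧ Monotone Q ∧ (∀ x, |P x| ≤ V + C) ∧ (∀ x, |Q x| ≤ V + C) ∧
      EqOn f (P - Q) s := by
  have hVC : (0 : ℝ) ≤ V + C := by positivity
  rcases s.eq_empty_or_nonempty with rfl | ⟨c, hc⟩
  · exact ⟨0, 0, monotone_const, monotone_const, fun _ => by simpa using hVC,
      fun _ => by simpa using hVC, fun _ h => h.elim⟩
  have hbv : LocallyBoundedVariationOn f s :=
    BoundedVariationOn.locallyBoundedVariationOn (ne_top_of_le_ne_top ENNReal.coe_ne_top hV)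
  have hvar : ∀ x, |variationOnFromTo f s c x| ≤ V := fun x =>
    (variationOnFromTo.abs_le_eVariationOn (ne_top_of_le_ne_top ENNReal.coe_ne_top hV)).trans
      (ENNReal.toReal_le_coe_of_le_coe hV)
  obtain ⟨P, hP, hfP, hPb⟩ :=
    (variationOnFromTo.monotoneOn hbv hc).exists_monotone_extension_abs_le
      hVC fun x _ => (hvar x).trans (le_add_of_nonneg_right C.2)
  obtain ⟨Q, hQ, hfQ, hQb⟩ :=
    (variationOnFromTo.sub_self_monotoneOn hbv hc).exists_monotone_extension_abs_le
      hVC fun x hx => (abs_sub _ _).trans (add_le_add (hvar x) (hC x hx))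
  refine ⟨P, Q, hP, hQ, hPb, hQb, fun x hx => ?_⟩
  simp [← hfP hx, ← hfQ hx]

/-- **Helly's selection theorem** for functions of bounded variation. -/
theorem exists_subseq_tendsto_of_eVariationOn_le {ι : Type*} [Countable ι] {s : Set ℝ}
    {C V : ℝ≥0} (f : ℕ → ι → ℝ → ℝ) (hC : ∀ k i, ∀ x ∈ s, |f k i x| ≤ C)
    (hV : ∀ k i, eVariationOn (f k i) s ≤ V) :
    ∃ φ : ℕ → ℕ, StrictMono φ ∧ ∃ N : Set ℝ, N.Countable ∧ ∃ g : ι → ℝ → ℝ,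
      ∀ i, ∀ x ∈ s, x ∉ N → Tendsto (fun k => f (φ k) i x) atTop (𝓝 (g i x)) := by
  choose P Q hP hQ hPb hQb hfPQ using fun k i =>
    exists_monotone_sub_monotone_of_eVariationOn_le (hC k i) (hV k i)
  obtain ⟨φ, hφ, N, hN, g, hg⟩ := exists_subseq_tendsto_of_monotone
    (fun k (i : ι ⊕ ι) => Sum.elim (P k) (Q k) i)
    (fun k i => i.rec (hP k) (hQ k)) (fun k i => i.rec (hPb k) (hQb k))
  refine ⟨φ, hφ, N, hN, fun i x => g (.inl i) x - g (.inr i) x, fun i x hx hxN => ?_⟩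
  exact ((hg (.inl i) x hxN).sub (hg (.inr i) x hxN)).congr fun k => (hfPQ (φ k) i hx).symm

namespace MeasureTheory

variable {α β : Type*} [MeasurableSpace α] {μ : Measure α} {p : ℝ≥0∞}

theorem unifIntegrable_of_ae_norm_le [NormedAddCommGroup β] {ι : Type*} (hp : 1 ≤ p)
    (hp' : p ≠ ∞) {f : ι → α → β} (hf : ∀ i, AEStronglyMeasurable (f i) μ) {C : ℝ≥0}
    (hC : ∀ i, ∀ᵐ x ∂μ, ‖f i x‖ ≤ C) : UnifIntegrable f p μ := by
  refine unifIntegrable_of hp hp' hf fun ε _ => ⟨C + 1, fun i => ?_⟩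
  have hzero : {x | C + 1 ≤ ‖f i x‖₊}.indicator (f i) =ᵐ[μ] 0 := by
    filter_upwards [hC i] with x hx
    refine indicator_of_notMem (fun h => ?_) _
    have h' : (C : ℝ) + 1 ≤ ‖f i x‖ := by exact_mod_cast h
    linarith
  rw [eLpNorm_congr_ae hzero, eLpNorm_zero]
  exact zero_le

theorem Lp.exists_tendsto_of_tendsto_ae_of_norm_le [NormedAddCommGroup β] [IsFiniteMeasure μ]
    [Fact (1 ≤ p)] (hp : p ≠ ∞) {u : ℕ → Lp β p μ} {g : α → β} {C : ℝ≥0}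
    (hC : ∀ k, ∀ᵐ x ∂μ, ‖u k x‖ ≤ C)
    (hug : ∀ᵐ x ∂μ, Tendsto (fun k => u k x) atTop (𝓝 (g x))) :
    ∃ w : Lp β p μ, Tendsto u atTop (𝓝 w) := by
  have hgC : ∀ᵐ x ∂μ, ‖g x‖ ≤ C := by
    filter_upwards [hug, ae_all_iff.2 hC] with x hx hxC
    exact le_of_tendsto' hx.norm hxC
  have hg : MemLp g p μ := MemLp.of_bound
    (aestronglyMeasurable_of_tendsto_ae atTop (fun k => Lp.aestronglyMeasurable (u k)) hug) C hgC
  exact ⟨hg.toLp g, Lp.tendsto_Lp_of_tendsto_eLpNorm _ hg <|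
    tendsto_Lp_finite_of_tendsto_ae Fact.out hp (fun k => Lp.aestronglyMeasurable _) hg
      (unifIntegrable_of_ae_norm_le Fact.out hp (fun k => Lp.aestronglyMeasurable _) hC) hug⟩

variable [NormedAddCommGroup β] [NormedSpace ℝ β] [IsFiniteMeasure μ] [Fact (1 ≤ p)]

theorem Lp.norm_integral_le (f : Lp β p μ) :
    ‖∫ x, f x ∂μ‖ ≤ (μ univ ^ (1 - p.toReal⁻¹)).toReal * ‖f‖ := by
  have hexp : 0 ≤ 1 - p.toReal⁻¹ := by
    rcases eq_or_ne p ∞ with rfl | hp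
    · simp
    · have : 1 ≤ p.toReal := by simpa using ENNReal.toReal_mono hp (Fact.out : 1 ≤ p)
      exact sub_nonneg.2 (inv_le_one_of_one_le₀ this)
  have hHolder := eLpNorm_le_eLpNorm_mul_rpow_measure_univ (p := 1) (q := p) (μ := μ) Fact.out
    (Lp.aestronglyMeasurable f)
  calc ‖∫ x, f x ∂μ‖ ≤ ∫ x, ‖f x‖ ∂μ := norm_integral_le_integral_norm _
    _ = (eLpNorm f 1 μ).toReal := by
      rw [eLpNorm_one_eq_lintegral_enorm,
        integral_norm_eq_lintegral_enorm (Lp.aestronglyMeasurable f)]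
    _ ≤ (eLpNorm f p μ * μ univ ^ (1 - p.toReal⁻¹)).toReal :=
      ENNReal.toReal_mono
        (ENNReal.mul_ne_top (Lp.eLpNorm_ne_top f)
          (ENNReal.rpow_ne_top_of_nonneg hexp (measure_ne_top μ univ)))
        (by simpa using hHolder)
    _ = (μ univ ^ (1 - p.toReal⁻¹)).toReal * ‖f‖ := by
      rw [ENNReal.toReal_mul, Lp.norm_def, mul_comm]

variable (μ p) in
noncomputable def Lp.integralCLM : Lp β p μ →L[ℝ] β :=
  LinearMap.mkContinuous
    { toFun := fun f => ∫ x, f x ∂μ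
      map_add' := fun f g => by
        rw [← integral_add ((Lp.memLp f).integrable Fact.out) ((Lp.memLp g).integrable Fact.out)]
        exact integral_congr_ae (Lp.coeFn_add f g)
      map_smul' := fun c f => by
        rw [RingHom.id_apply, ← integral_smul]
        exact integral_congr_ae (Lp.coeFn_smul c f) }
    _ Lp.norm_integral_le

variable (μ p) in
noncomputable def Lp.setIntegralCLM (s : Set α) : Lp β p μ →L[ℝ] β :=
  (Lp.integralCLM (μ.restrict s) p).comp (LpToLpRestrictCLM α β ℝ μ p s)

theorem Lp.setIntegralCLM_apply (s : Set α) (f : Lp β p μ) :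
    Lp.setIntegralCLM μ p s f = ∫ x in s, f x ∂μ :=
  integral_congr_ae (LpToLpRestrictCLM_coeFn ℝ s f)

end MeasureTheory

theorem isCompact_of_forall_ae_eq_eVariationOn_le {ι : Type*} [Fintype ι] {s : Set ℝ}
    (hs : MeasurableSet s) [IsFiniteMeasure (volume.restrict s)] {p : ℝ≥0∞} [Fact (1 ≤ p)]
    (hp : p ≠ ∞) {C V : ℝ≥0} {D : Set (Lp (ι → ℝ) p (volume.restrict s))} (hD : IsClosed D)
    (hDv : ∀ u ∈ D, ∃ v : ℝ → ι → ℝ, (u : ℝ → ι → ℝ) =ᵐ[volume.restrict s] v ∧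
      (∀ t ∈ s, ‖v t‖ ≤ C) ∧ ∀ i, eVariationOn (fun t => v t i) s ≤ V) :
    IsCompact D := by
  refine IsSeqCompact.isCompact fun u hu => ?_
  choose v huv hvC hvV using fun k => hDv (u k) (hu k)
  obtain ⟨φ, hφ, N, hN, g, hg⟩ := exists_subseq_tendsto_of_eVariationOn_le
    (fun k i t => v k t i) (fun k i t ht => (norm_le_pi_norm (v k t) i).trans (hvC k t ht)) hvV
  have hlim : ∀ᵐ t ∂volume.restrict s,
      Tendsto (fun k => u (φ k) t) atTop (𝓝 fun i => g i t) := by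
    filter_upwards [ae_restrict_mem hs, ae_restrict_of_ae (hN.ae_notMem volume),
      ae_all_iff.2 fun k => huv (φ k)] with t hts htN huvt
    exact tendsto_pi_nhds.2 fun i => (hg i t hts htN).congr fun k => by rw [huvt k]
  have hbound : ∀ k, ∀ᵐ t ∂volume.restrict s, ‖u (φ k) t‖ ≤ C := fun k => by
    filter_upwards [ae_restrict_mem hs, huv (φ k)] with t hts huvt
    exact huvt ▸ hvC (φ k) t hts
  obtain ⟨w, hw⟩ := Lp.exists_tendsto_of_tendsto_ae_of_norm_le hp hbound hlim
  exact ⟨w, hD.isSeqClosed (fun k => hu (φ k)) hw, φ, hφ, hw⟩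

theorem stmt_5
    (T : ℝ) (n : ℕ) (p : ℝ≥0∞) [Fact (1 ≤ p)] (hp : p ≠ ⊤)
    (σ : ℝ)
    (D : Set (Lp (Fin n → ℝ) p (volume.restrict (Ioo (0:ℝ) T))))
    (hD1 : ∀ u ∈ D, ∃ v : ℝ → Fin n → ℝ,
      ((u : ℝ → Fin n → ℝ) =ᵐ[volume.restrict (Ioo (0:ℝ) T)] v) ∧
      (∀ t ∈ Ioo (0:ℝ) T, ∀ j, v t j = 0 ∨ v t j = 1) ∧
      (∑ j : Fin n, eVariationOn (fun s => v s j) (Ioo (0:ℝ) T)) ≤ ENNReal.ofReal σ)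
    (hD2 : IsClosed D)
    (M : ℕ) (a b : Fin M → ℝ)
    (j : Fin M → Fin n) :
    closure (convexHull ℝ D) ⊆
      {v : Lp (Fin n → ℝ) p (volume.restrict (Ioo (0:ℝ) T)) |
        (fun i : Fin M => (b i - a i)⁻¹ *
            ∫ t in Ioo (a i) (b i), (v : ℝ → Fin n → ℝ) t (j i)
              ∂(volume.restrict (Ioo (0:ℝ) T))) ∈
          convexHull ℝ
            ((fun u : Lp (Fin n → ℝ) p (volume.restrict (Ioo (0:ℝ) T)) =>
                fun i : Fin M => (b i - a i)⁻¹ *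
                  ∫ t in Ioo (a i) (b i), (u : ℝ → Fin n → ℝ) t (j i)
                    ∂(volume.restrict (Ioo (0:ℝ) T))) '' D)} := by
  have : IsFiniteMeasure (volume.restrict (Ioo (0:ℝ) T)) :=
    isFiniteMeasure_restrict.2 measure_Ioo_lt_top.ne
  have hDc : IsCompact D := by
    refine isCompact_of_forall_ae_eq_eVariationOn_le measurableSet_Ioo hp (C := 1)
      (V := σ.toNNReal) hD2 fun u hu => ?_
    obtain ⟨v, huv, hv01, hvar⟩ := hD1 u hu
    refine ⟨v, huv, fun t ht => (pi_norm_le_iff_of_nonneg zero_le_one).2 fun i => ?_,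
      fun i => (Finset.single_le_sum (fun i _ => zero_le) (Finset.mem_univ i)).trans hvar⟩
    rcases hv01 t ht i with h | h <;> simp [h]
  let avg : Lp (Fin n → ℝ) p (volume.restrict (Ioo (0:ℝ) T)) →L[ℝ] Fin M → ℝ :=
    .pi fun i => (b i - a i)⁻¹ •
      (ContinuousLinearMap.proj (R := ℝ) (φ := fun _ : Fin n => ℝ) (j i)).comp
        (Lp.setIntegralCLM _ p (Ioo (a i) (b i)))
  have havg : ⇑avg = fun (v : Lp (Fin n → ℝ) p (volume.restrict (Ioo (0:ℝ) T))) i =>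
      (b i - a i)⁻¹ * ∫ t in Ioo (a i) (b i), (v : ℝ → Fin n → ℝ) t (j i)
        ∂(volume.restrict (Ioo (0:ℝ) T)) := by
    ext v i
    have hint : Integrable v ((volume.restrict (Ioo (0:ℝ) T)).restrict (Ioo (a i) (b i))) :=
      ((Lp.memLp v).restrict _).integrable Fact.out
    simp only [avg, ContinuousLinearMap.pi_apply, smul_apply, ContinuousLinearMap.comp_apply,
      ContinuousLinearMap.proj_apply, Lp.setIntegralCLM_apply, smul_eq_mul, eval_integral hint.eval]
  have h := closure_convexHull_subset_preimage_convexHull_image avg hDc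
  rwa [havg] at h
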